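/- arXiv:1402.6560 — 5 statements merged into one kernel-verified Lean document; each statement's English description precedes it below -/
import Mathlib

section
/- Counterexample to Pouly–Kohlas Theorem 8.1: Let x, y be two binary variables and let φ : {0,1}×{0,1} → {0,1} be defined by φ(a,b) = 1 if a = b and 0 otherwise. With projection by maximization and solution/extension sets W_φ(x) = { y : φ(x,y) = φ^{↓X}(x) }, taking X = {x} and Y = {y}, the set c_φ^{↓X∪Y} = {(0,0),(1,1)} is a strict subset of the set { z ∈ Ω_{X∪Y} : z↓Y ∈ c_φ^{↓Y} and z↓(X−Y) ∈ W_{φ^{↓X}}(z↓(X∩Y)) }, which equals all of Ω_{X∪Y}; hence the two sets are not equal. -/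
open Classical

variable {V : Type*} [DecidableEq V]

/-- The set of configurations (tuples) over a finite set `S` of variables with frames `Ω`. -/
abbrev Cfg (Ω : V → Type*) (S : Finset V) := (v : {x // x ∈ S}) → Ω v.1

/-- Restriction (tuple projection) of a configuration to a subset of its domain. -/
def restrict {Ω : V → Type*} {S T : Finset V} (h : S ⊆ T) (x : Cfg Ω T) : Cfg Ω S :=
  fun v => x ⟨v.1, h v.2⟩

/-- Extend a configuration to a larger domain by arbitrary values. -/
noncomputable def extendCfg {Ω : V → Type*} [∀ v, Nonempty (Ω v)] {S T : Finset V}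
    (h : S ⊆ T) (x : Cfg Ω S) : Cfg Ω T :=
  fun v => if hv : v.1 ∈ S then x ⟨v.1, hv⟩ else Classical.arbitrary (Ω v.1)

theorem restrict_extendCfg {Ω : V → Type*} [∀ v, Nonempty (Ω v)] {S T : Finset V}
    (h : S ⊆ T) (x : Cfg Ω S) : restrict h (extendCfg h x) = x := by
  funext v; simp [restrict, extendCfg, v.2]

/-- Projection by maximization: `φ^{↓X}(x) = max { φ(z) : z ∈ Ω_D, z↓X = x }`. -/
noncomputable def projv {Ω : V → Type*} [∀ v, Fintype (Ω v)] [∀ v, Nonempty (Ω v)]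
    [∀ v, DecidableEq (Ω v)] {X D : Finset V} (φ : Cfg Ω D → ℝ) (h : X ⊆ D)
    (x : Cfg Ω X) : ℝ :=
  (Finset.univ.filter fun z : Cfg Ω D => restrict h z = x).sup'
    ⟨extendCfg h x, Finset.mem_filter.mpr ⟨Finset.mem_univ _, restrict_extendCfg h x⟩⟩ φ

/-- The empty configuration `⋄`. -/
def emptyCfg {V : Type*} [DecidableEq V] {Ω : V → Type*} : Cfg Ω (∅ : Finset V) :=
  fun v => absurd v.2 (Finset.notMem_empty v.1)

/-- The two binary variables: `X = {x}`, `Y = {y}`. -/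
def Xc : Finset (Fin 2) := {0}
def Yc : Finset (Fin 2) := {1}

theorem h0mem : (0 : Fin 2) ∈ Xc ∪ Yc := by decide
theorem h1mem : (1 : Fin 2) ∈ Xc ∪ Yc := by decide

/-- The valuation `φ(a,b) = 1` iff `a = b`, as a Boolean ({0,1}-valued) function. -/
noncomputable def φc : Cfg (fun _ : Fin 2 => Bool) (Xc ∪ Yc) → ℝ :=
  fun z => if z ⟨0, h0mem⟩ = z ⟨1, h1mem⟩ then 1 else 0

/-- The solution set `c_φ = W_φ(⋄)`: the set of global maximizers of `φ`. -/
noncomputable def cφc : Set (Cfg (fun _ : Fin 2 => Bool) (Xc ∪ Yc)) :=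
  {z | φc z = projv φc (Finset.empty_subset _) emptyCfg}

/-- The left-hand side of equation (8.1): `c_φ^{↓X∪Y}`. -/
noncomputable def lhsSet : Set (Cfg (fun _ : Fin 2 => Bool) (Xc ∪ Yc)) :=
  restrict (Finset.Subset.refl (Xc ∪ Yc)) '' cφc

/-- The right-hand side of equation (8.1):
`{ z : z↓Y ∈ c_φ^{↓Y} and z↓(X−Y) ∈ W_{φ^{↓X}}(z↓(X∩Y)) }`, where the second
condition is expressed equivalently as `φ^{↓X}(z↓X) = (φ^{↓X})^{↓X∩Y}(z↓(X∩Y))`. -/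
noncomputable def rhsSet : Set (Cfg (fun _ : Fin 2 => Bool) (Xc ∪ Yc)) :=
  {z | restrict Finset.subset_union_right z
          ∈ restrict (Finset.subset_union_right : Yc ⊆ Xc ∪ Yc) '' cφc
    ∧ projv φc Finset.subset_union_left (restrict Finset.subset_union_left z)
        = projv (projv φc (Finset.subset_union_left : Xc ⊆ Xc ∪ Yc))
            (Finset.inter_subset_left : Xc ∩ Yc ⊆ Xc)
            (restrict ((Finset.inter_subset_left).trans Finset.subset_union_left) z)}

/-! Every value of `x` extends to a maximizer `(a, a)` of `φ`, so `φ^{↓X}` is constantly `1` and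
the extension condition `z↓(X−Y) ∈ W_{φ^{↓X}}(z↓(X∩Y))` holds for every `z`; likewise every
value of `y` is the restriction of a maximizer. So the right-hand side is all of `Ω_{X∪Y}`,
while `c_φ` is only the diagonal. -/

section Projection

variable {Ω : V → Type*} [∀ v, Fintype (Ω v)] [∀ v, Nonempty (Ω v)] [∀ v, DecidableEq (Ω v)]
  {X D : Finset V}

theorem projv_eq_of_le_of_eq {φ : Cfg Ω D → ℝ} {c : ℝ} (h : X ⊆ D) {x : Cfg Ω X}
    (hle : ∀ z, φ z ≤ c) (z : Cfg Ω D) (hz : restrict h z = x) (hzc : φ z = c) :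
    projv φ h x = c :=
  le_antisymm (Finset.sup'_le _ _ fun w _ => hle w)
    (hzc ▸ Finset.le_sup' φ (Finset.mem_filter.mpr ⟨Finset.mem_univ _, hz⟩))

theorem projv_of_forall_eq {φ : Cfg Ω D → ℝ} {c : ℝ} (hφ : ∀ z, φ z = c) (h : X ⊆ D)
    (x : Cfg Ω X) : projv φ h x = c :=
  projv_eq_of_le_of_eq h (fun z => (hφ z).le) _ (restrict_extendCfg h x) (hφ _)

end Projection

theorem φc_eq_one_iff (z : Cfg (fun _ : Fin 2 => Bool) (Xc ∪ Yc)) :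
    φc z = 1 ↔ z ⟨0, h0mem⟩ = z ⟨1, h1mem⟩ := by
  unfold φc; split_ifs <;> simp_all

theorem φc_le_one (z : Cfg (fun _ : Fin 2 => Bool) (Xc ∪ Yc)) : φc z ≤ 1 := by
  unfold φc; split_ifs <;> norm_num

theorem projv_φc_of_subset_Xc {X : Finset (Fin 2)} (hX : X ⊆ Xc) (h : X ⊆ Xc ∪ Yc)
    (x : Cfg (fun _ : Fin 2 => Bool) X) : projv φc h x = 1 := by
  set a := extendCfg hX x ⟨0, Finset.mem_singleton_self 0⟩
  refine projv_eq_of_le_of_eq h φc_le_one (fun _ => a) ?_ ((φc_eq_one_iff _).mpr rfl)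
  funext ⟨v, hv⟩
  obtain rfl : v = 0 := Finset.mem_singleton.mp (hX hv)
  exact restrict_extendCfg hX x ▸ rfl

theorem mem_cφc_iff (z : Cfg (fun _ : Fin 2 => Bool) (Xc ∪ Yc)) :
    z ∈ cφc ↔ z ⟨0, h0mem⟩ = z ⟨1, h1mem⟩ := by
  rw [cφc, Set.mem_ofPred_eq, projv_φc_of_subset_Xc (Finset.empty_subset _), φc_eq_one_iff]

theorem lhsSet_eq :
    lhsSet = {z : Cfg (fun _ : Fin 2 => Bool) (Xc ∪ Yc) | z ⟨0, h0mem⟩ = z ⟨1, h1mem⟩} := by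
  ext z
  change z ∈ (fun w => w) '' cφc ↔ _
  rw [Set.image_id', mem_cφc_iff]
  rfl

theorem rhsSet_eq_univ : rhsSet = Set.univ := by
  refine Set.eq_univ_of_forall fun z => ⟨⟨fun _ => z ⟨1, h1mem⟩, (mem_cφc_iff _).mpr rfl, ?_⟩, ?_⟩
  · funext ⟨v, hv⟩
    obtain rfl : v = 1 := Finset.mem_singleton.mp hv
    rfl
  · rw [projv_φc_of_subset_Xc subset_rfl,
      projv_of_forall_eq (projv_φc_of_subset_Xc subset_rfl Finset.subset_union_left)]

/-- counterexample to Pouly–Kohlas Theorem 8.1.  For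
`φ(a,b) = [a=b]`, `X = {x}`, `Y = {y}`: the set `c_φ^{↓X∪Y}` equals
`{(0,0),(1,1)}` (tuples with equal coordinates), the right-hand side set equals
all of `Ω_{X∪Y}`, and hence the two sets are not equal. -/
theorem counterexample_thm_8_1 :
    lhsSet = {z : Cfg (fun _ : Fin 2 => Bool) (Xc ∪ Yc) | z ⟨0, h0mem⟩ = z ⟨1, h1mem⟩}
    ∧ rhsSet = Set.univ
    ∧ lhsSet ≠ rhsSet := by
  refine ⟨lhsSet_eq, rhsSet_eq_univ, fun h => ?_⟩
  have hoffDiag : (fun v => decide (v.1 = 1) : Cfg (fun _ : Fin 2 => Bool) (Xc ∪ Yc)) ∈ lhsSet :=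
    h ▸ rhsSet_eq_univ ▸ Set.mem_univ _
  rw [lhsSet_eq] at hoffDiag
  simp at hoffDiag
end

section
/- Piecewise extensibility extends to finite products: let ℰ be a piecewise extensible family of configuration extension sets over a valuation algebra with configuration system. Let φ₁,…,φ_m be valuations with domains d₁,…,d_m, φ = ∏ᵢ φᵢ, rᵢ = dᵢ ∧ (⋁_{j≠i} d_j), and t ∈ D with ⋁ᵢ dᵢ ≥ t ≥ ⋁ᵢ rᵢ. If x ∈ Γ_t and z is an extension of x to each φᵢ (i.e., z_{dᵢ} ∈ E_{φᵢ}(x_{t∧dᵢ}) for all i), then z is an extension of x to φ (z ∈ E_φ(x)). -/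
/-- A valuation algebra over a lattice `D` (axioms A1–A6). -/
structure ValuationAlgebra (Φ : Type*) (D : Type*) [Lattice D] [OrderBot D] where
  dom : Φ → D
  comb : Φ → Φ → Φ
  proj : Φ → D → Φ
  /-- A1: commutativity. -/
  comb_comm : ∀ φ ψ, comb φ ψ = comb ψ φ
  /-- A1: associativity. -/
  comb_assoc : ∀ φ ψ χ, comb (comb φ ψ) χ = comb φ (comb ψ χ)
  /-- A2: labeling. -/
  dom_comb : ∀ φ ψ, dom (comb φ ψ) = dom φ ⊔ dom ψ
  /-- A3: projection. -/
  dom_proj : ∀ φ x, x ≤ dom φ → dom (proj φ x) = x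
  /-- A4: transitivity. -/
  proj_trans : ∀ φ x y, x ≤ y → y ≤ dom φ → proj (proj φ y) x = proj φ x
  /-- A5: combination. -/
  comb_proj : ∀ φ ψ z, dom φ ≤ z → z ≤ dom φ ⊔ dom ψ →
      proj (comb ψ φ) z = comb φ (proj ψ (z ⊓ dom ψ))
  /-- A6: domain. -/
  proj_dom : ∀ φ, proj φ (dom φ) = φ

/-- A configuration system over a lattice `D`: mutually exclusive configuration
sets `Γ s` with surjective, compatible projections, and `Γ ⊥ = {⋄}`. -/
structure ConfigSystem (D : Type*) [Lattice D] [OrderBot D] (Γ : D → Type*) where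
  cproj : ∀ {s t : D}, s ≤ t → Γ t → Γ s
  cproj_surj : ∀ {s t : D} (h : s ≤ t), Function.Surjective (cproj h)
  cproj_comp : ∀ {s t u : D} (h₁ : s ≤ t) (h₂ : t ≤ u) (x : Γ u),
      cproj h₁ (cproj h₂ x) = cproj (h₁.trans h₂) x
  cproj_refl : ∀ {s : D} (x : Γ s), cproj le_rfl x = x
  /-- The empty configuration `⋄`. -/
  diamond : Γ ⊥
  diamond_unique : ∀ x : Γ ⊥, x = diamond

/-- A family of configuration extension sets `E_φ(x) ⊆ Γ_{d(φ)}` for `x ∈ Γ_s`,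
`s ≤ d(φ)`, together with the solution concept `c`, satisfying conditions
(1)–(3): identity on the own scope, two-step decomposition through intermediate
scopes, and `c_φ = E_φ(⋄)`.  (The index `d` together with the proof
`VA.dom φ = d` is used to state the scope of the extension sets.) -/
structure ExtFamily {Φ D : Type*} [Lattice D] [OrderBot D] {Γ : D → Type*}
    (VA : ValuationAlgebra Φ D) (CS : ConfigSystem D Γ) where
  E : ∀ (φ : Φ) {s d : D}, VA.dom φ = d → s ≤ d → Γ s → Set (Γ d)
  sol : ∀ (φ : Φ) {d : D}, VA.dom φ = d → Set (Γ d)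
  self_ext : ∀ (φ : Φ) (d : D) (hd : VA.dom φ = d) (x : Γ d),
      E φ hd le_rfl x = {x}
  two_step : ∀ (φ : Φ) (d : D) (hd : VA.dom φ = d) (s t : D)
      (hst : s ≤ t) (_ : s ≠ t) (htd : t ≤ d) (x : Γ s),
      E φ hd (hst.trans htd) x
        = {y : Γ d | CS.cproj htd y
              ∈ E (VA.proj φ t) (VA.dom_proj φ t (htd.trans_eq hd.symm)) hst x
            ∧ y ∈ E φ hd htd (CS.cproj htd y)}
  sol_eq : ∀ (φ : Φ) (d : D) (hd : VA.dom φ = d),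
      sol φ hd = E φ hd bot_le CS.diamond

/-- A configuration system is merge-friendly when configurations agreeing on
the meet of their scopes admit a merger on the join of their scopes. -/
def ConfigSystem.MergeFriendly {D : Type*} [Lattice D] [OrderBot D] {Γ : D → Type*}
    (CS : ConfigSystem D Γ) : Prop :=
  ∀ (s t : D) (x : Γ s) (y : Γ t),
    CS.cproj inf_le_left x = CS.cproj inf_le_right y →
      ∃ z : Γ (s ⊔ t), CS.cproj le_sup_left z = x ∧ CS.cproj le_sup_right z = y

/-- Piecewise extensibility: a simultaneous extension of `x` to two valuations
is an extension of `x` to their combination. -/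
def ExtFamily.PiecewiseExtensible {Φ D : Type*} [Lattice D] [OrderBot D]
    {Γ : D → Type*} {VA : ValuationAlgebra Φ D} {CS : ConfigSystem D Γ}
    (F : ExtFamily VA CS) : Prop :=
  ∀ (φ₁ φ₂ : Φ) (d₁ d₂ : D) (h₁ : VA.dom φ₁ = d₁) (h₂ : VA.dom φ₂ = d₂)
    (t : D) (ht₁ : d₁ ⊓ d₂ ≤ t) (ht₂ : t ≤ d₁ ⊔ d₂)
    (x : Γ t) (z : Γ (d₁ ⊔ d₂)),
    CS.cproj le_sup_left z ∈ F.E φ₁ h₁ inf_le_right (CS.cproj inf_le_left x) →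
    CS.cproj le_sup_right z ∈ F.E φ₂ h₂ inf_le_right (CS.cproj inf_le_left x) →
    z ∈ F.E (VA.comb φ₁ φ₂)
          (show VA.dom (VA.comb φ₁ φ₂) = d₁ ⊔ d₂ by rw [VA.dom_comb, h₁, h₂])
          ht₂ x

/-- The combination `f 0 × f 1 × ⋯ × f n` of finitely many valuations. -/
def prodFin {Φ D : Type*} [Lattice D] [OrderBot D] (VA : ValuationAlgebra Φ D)
    {n : ℕ} (f : Fin (n + 1) → Φ) : Φ :=
  (List.ofFn fun i : Fin n => f i.succ).foldl VA.comb (f 0)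

/-!
Induction on the number of factors, splitting `φ = (φ₀ × ⋯ × φₙ₋₁) × φₙ`. The domains of the
two factors meet below `rₙ ≤ t`, so binary piecewise extensibility applies as soon as the
restriction of `z` extends `x_{t ∧ (d₀ ∨ ⋯ ∨ dₙ₋₁)}` to the partial product. That is the
induction hypothesis at the scope `t ∧ (d₀ ∨ ⋯ ∨ dₙ₋₁)`, which is admissible because the
overlaps `rᵢ` computed among `d₀, …, dₙ₋₁` only shrink.
-/

open Finset

section Overlap

variable {α : Type*}

theorem Fin.sup_univ_castSucc [SemilatticeSup α] [OrderBot α] {n : ℕ} (g : Fin (n + 1) → α) :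
    univ.sup g = univ.sup (fun i : Fin n => g i.castSucc) ⊔ g (Fin.last n) := by
  rw [Fin.univ_castSuccEmb, sup_cons, sup_map, sup_comm]
  rfl

variable [Lattice α] [OrderBot α]

/-- `overlap g i` is the paper's `rᵢ = gᵢ ∧ ⋁_{j ≠ i} gⱼ`. -/
def overlap {n : ℕ} (g : Fin n → α) (i : Fin n) : α :=
  g i ⊓ (univ.erase i).sup g

theorem sup_overlap_le_sup {n : ℕ} (g : Fin n → α) : univ.sup (overlap g) ≤ univ.sup g :=
  sup_mono_fun fun _ _ => inf_le_left

theorem overlap_castSucc_le {n : ℕ} (g : Fin (n + 1) → α) (i : Fin n) :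
    overlap (fun j : Fin n => g j.castSucc) i ≤ overlap g i.castSucc := by
  refine inf_le_inf_left _ (Finset.sup_le fun j hj => le_sup ?_)
  simp only [mem_erase, mem_univ, and_true] at hj ⊢
  exact fun h => hj (Fin.castSucc_injective _ h)

theorem sup_overlap_castSucc_le {n : ℕ} (g : Fin (n + 1) → α) :
    univ.sup (overlap fun j : Fin n => g j.castSucc) ≤ univ.sup (overlap g) :=
  Finset.sup_le fun i _ => (overlap_castSucc_le g i).trans (le_sup (mem_univ _))

theorem sup_castSucc_inf_last_le_overlap {n : ℕ} (g : Fin (n + 1) → α) :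
    univ.sup (fun i : Fin n => g i.castSucc) ⊓ g (Fin.last n) ≤ overlap g (Fin.last n) := by
  rw [inf_comm]
  refine inf_le_inf_left _ (Finset.sup_le fun i _ => le_sup ?_)
  simpa only [mem_erase, mem_univ, and_true] using (Fin.castSucc_lt_last i).ne

end Overlap

section Products

variable {Φ D : Type*} [Lattice D] [OrderBot D] (VA : ValuationAlgebra Φ D)

theorem prodFin_zero (f : Fin 1 → Φ) : prodFin VA f = f 0 :=
  rfl

theorem prodFin_succ {n : ℕ} (f : Fin (n + 2) → Φ) :
    prodFin VA f
      = VA.comb (prodFin VA fun i : Fin (n + 1) => f i.castSucc) (f (Fin.last _)) := by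
  simp only [prodFin, List.ofFn_succ', List.concat_eq_append, List.foldl_append,
    List.foldl_cons, List.foldl_nil, Fin.succ_last]
  rfl

theorem dom_prodFin {n : ℕ} (f : Fin (n + 1) → Φ) (d : Fin (n + 1) → D)
    (hd : ∀ i, VA.dom (f i) = d i) : VA.dom (prodFin VA f) = univ.sup d := by
  induction n with
  | zero => simp [prodFin_zero, hd]
  | succ m ih =>
    rw [prodFin_succ, VA.dom_comb, ih _ _ fun i => hd _, hd, Fin.sup_univ_castSucc d]

end Products

namespace ExtFamily

variable {Φ D : Type*} [Lattice D] [OrderBot D] {Γ : D → Type*}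
  {VA : ValuationAlgebra Φ D} {CS : ConfigSystem D Γ} (F : ExtFamily VA CS)

theorem mem_E_cproj_iff {φ φ' : Φ} {s e e' : D} (hφ : φ = φ') (he : e = e')
    (hd : VA.dom φ = e) (hd' : VA.dom φ' = e') (h : s ≤ e) (h' : s ≤ e') (x : Γ s)
    (y : Γ e') :
    CS.cproj he.le y ∈ F.E φ hd h x ↔ y ∈ F.E φ' hd' h' x := by
  subst hφ he
  rw [CS.cproj_refl]

theorem mem_E_cproj_congr {φ : Φ} {s s' u e : D} (hs : s = s') (hd : VA.dom φ = e)
    (h : s ≤ e) (h' : s' ≤ e) (hu : s ≤ u) (hu' : s' ≤ u) (x : Γ u) (y : Γ e) :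
    y ∈ F.E φ hd h (CS.cproj hu x) ↔ y ∈ F.E φ hd h' (CS.cproj hu' x) := by
  subst hs
  rfl

theorem mem_E_inf_cproj_iff {φ : Φ} {t u e : D} (hd : VA.dom φ = e) (heu : e ≤ u)
    (x : Γ t) (y : Γ e) :
    y ∈ F.E φ hd inf_le_right (CS.cproj inf_le_left (CS.cproj (inf_le_left : t ⊓ u ≤ t) x))
      ↔ y ∈ F.E φ hd inf_le_right (CS.cproj inf_le_left x) := by
  rw [CS.cproj_comp]
  exact F.mem_E_cproj_congr (by rw [inf_assoc, inf_eq_right.mpr heu]) hd _ _ _ _ x y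

theorem mem_E_prodFin_one (φs : Fin 1 → Φ) (d : Fin 1 → D) (hd : ∀ i, VA.dom (φs i) = d i)
    (t : D) (ht : t ≤ univ.sup d) (x : Γ t) (z : Γ (univ.sup d))
    (hz : CS.cproj (le_sup (mem_univ 0)) z
      ∈ F.E (φs 0) (hd 0) inf_le_right (CS.cproj inf_le_left x))
    (hP : VA.dom (prodFin VA φs) = univ.sup d) :
    z ∈ F.E (prodFin VA φs) hP ht x := by
  have hd0 : d 0 = univ.sup d := by simp
  have hz' := (F.mem_E_cproj_iff (prodFin_zero VA φs).symm hd0 (hd 0) hP inf_le_right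
    (inf_le_left.trans ht) _ z).mp hz
  rwa [F.mem_E_cproj_congr (inf_eq_left.mpr (ht.trans hd0.ge)) hP _ ht _ le_rfl,
    CS.cproj_refl] at hz'

theorem mem_E_prodFin_succ (hF : F.PiecewiseExtensible) {n : ℕ} (φs : Fin (n + 2) → Φ)
    (d : Fin (n + 2) → D) (hd : ∀ i, VA.dom (φs i) = d i) (t : D)
    (ht₁ : univ.sup (fun i : Fin (n + 1) => d i.castSucc) ⊓ d (Fin.last _) ≤ t)
    (ht₂ : t ≤ univ.sup d) (x : Γ t) (z : Γ (univ.sup d))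
    (hinit : CS.cproj (le_sup_left.trans (Fin.sup_univ_castSucc d).ge) z
      ∈ F.E (prodFin VA fun i : Fin (n + 1) => φs i.castSucc)
          (dom_prodFin VA _ _ fun i => hd i.castSucc) inf_le_right (CS.cproj inf_le_left x))
    (hlast : CS.cproj (le_sup (mem_univ _)) z
      ∈ F.E (φs (Fin.last _)) (hd _) inf_le_right (CS.cproj inf_le_left x))
    (hP : VA.dom (prodFin VA φs) = univ.sup d) :
    z ∈ F.E (prodFin VA φs) hP ht₂ x := by
  have hsplit := Fin.sup_univ_castSucc d
  have hpair := hF _ _ _ _ (dom_prodFin VA _ _ fun i => hd i.castSucc) (hd _) t ht₁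
    (ht₂.trans hsplit.le) x (CS.cproj hsplit.ge z)
    (by rw [CS.cproj_comp]; exact hinit) (by rw [CS.cproj_comp]; exact hlast)
  exact (F.mem_E_cproj_iff (prodFin_succ VA φs).symm hsplit.symm _ hP _ ht₂ x z).mp hpair

end ExtFamily

/-- piecewise extensibility extends to finite products.  Let `ℰ`
be a piecewise extensible family of configuration extension sets, `φᵢ`
(`i = 0,…,n`) valuations with domains `dᵢ`, `φ = ∏ᵢ φᵢ`, `rᵢ = dᵢ ⊓ ⨆_{j≠i} dⱼ`,
and `t` with `⨆ᵢ dᵢ ≥ t ≥ ⨆ᵢ rᵢ`.  If `x ∈ Γ_t` and `z` is an extension of `x`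
to each `φᵢ` (`z_{dᵢ} ∈ E_{φᵢ}(x_{t⊓dᵢ})`), then `z` is an extension of `x` to
`φ` (`z ∈ E_φ(x)`). -/
theorem piecewise_extension_nary {Φ D : Type*} [Lattice D] [OrderBot D]
    {Γ : D → Type*} (VA : ValuationAlgebra Φ D) (CS : ConfigSystem D Γ)
    (F : ExtFamily VA CS) (hF : F.PiecewiseExtensible)
    (n : ℕ) (φs : Fin (n + 1) → Φ) (d : Fin (n + 1) → D)
    (hd : ∀ i, VA.dom (φs i) = d i)
    (t : D)
    (ht₁ : Finset.univ.sup (fun i => d i ⊓ (Finset.univ.erase i).sup d) ≤ t)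
    (ht₂ : t ≤ Finset.univ.sup d)
    (x : Γ t) (z : Γ (Finset.univ.sup d))
    (hz : ∀ i, CS.cproj (Finset.le_sup (Finset.mem_univ i)) z
            ∈ F.E (φs i) (hd i) inf_le_right (CS.cproj inf_le_left x))
    (hP : VA.dom (prodFin VA φs) = Finset.univ.sup d) :
    z ∈ F.E (prodFin VA φs) hP ht₂ x := by
  induction n generalizing t with
  | zero => exact F.mem_E_prodFin_one φs d hd t ht₂ x z (hz 0) hP
  | succ m ih =>
    set dInit := fun i : Fin (m + 1) => d i.castSucc
    have hInit : univ.sup dInit ≤ univ.sup d := le_sup_left.trans (Fin.sup_univ_castSucc d).ge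
    have ht₁Init : univ.sup (overlap dInit) ≤ t ⊓ univ.sup dInit :=
      le_inf ((sup_overlap_castSucc_le d).trans ht₁) (sup_overlap_le_sup dInit)
    have hinit := ih (fun i => φs i.castSucc) dInit (fun i => hd _) (t ⊓ univ.sup dInit)
      ht₁Init inf_le_right (CS.cproj inf_le_left x) (CS.cproj hInit z)
      (fun i => by
        rw [CS.cproj_comp _ hInit z]
        exact (F.mem_E_inf_cproj_iff (hd _) (le_sup (f := dInit) (mem_univ i)) x _).mpr
          (hz i.castSucc))
      (dom_prodFin VA _ _ fun i => hd _)
    exact F.mem_E_prodFin_succ hF φs d hd t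
      ((sup_castSucc_inf_last_le_overlap d).trans ((le_sup (mem_univ _)).trans ht₁))
      ht₂ x z hinit (hz _) hP
end

section
/- Binary solution-extension lemma: let ℰ be a piecewise extensible family of configuration extension sets, φ₁, φ₂ valuations with domains d₁, d₂, and φ = φ₁ × φ₂. If x ∈ c_{φ^{↓d₁}}, y is an extension of x to φ₂ (y ∈ E_{φ₂}(x_{d₁∧d₂})), and z ∈ Γ_{d₁∨d₂} is a merger of x and y (z_{d₁} = x and z_{d₂} = y), then z ∈ c_φ. -/
namespace ExtFamily

variable {Φ D : Type*} [Lattice D] [OrderBot D] {Γ : D → Type*}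
  {VA : ValuationAlgebra Φ D} {CS : ConfigSystem D Γ} (F : ExtFamily VA CS)

-- Stated for `s = d` only propositionally, as needed for scopes such as `d ⊓ d`.
theorem mem_E_cproj_self_of_eq (φ : Φ) {s d : D} (hd : VA.dom φ = d) (hs : s = d)
    (h₁ h₂ : s ≤ d) (x : Γ d) : x ∈ F.E φ hd h₂ (CS.cproj h₁ x) := by
  subst hs
  rw [CS.cproj_refl, F.self_ext φ _ hd x]
  rfl

theorem mem_sol_iff (φ : Φ) {s d : D} (hd : VA.dom φ = d) (hs : s ≤ d) (z : Γ d) :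
    z ∈ F.sol φ hd ↔
      CS.cproj hs z ∈ F.sol (VA.proj φ s) (VA.dom_proj φ s (hs.trans_eq hd.symm)) ∧
        z ∈ F.E φ hd hs (CS.cproj hs z) := by
  rw [F.sol_eq, F.sol_eq]
  by_cases hbot : (⊥ : D) = s
  · subst hbot
    rw [CS.diamond_unique (CS.cproj hs z), F.self_ext]
    simp
  · rw [F.two_step φ d hd ⊥ s bot_le hbot hs CS.diamond]
    rfl

theorem PiecewiseExtensible.mem_E_comb_of_mem_E_right {F : ExtFamily VA CS}
    (hF : F.PiecewiseExtensible) {φ₁ φ₂ : Φ} {d₁ d₂ : D} (h₁ : VA.dom φ₁ = d₁)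
    (h₂ : VA.dom φ₂ = d₂) (z : Γ (d₁ ⊔ d₂))
    (hz : CS.cproj le_sup_right z
      ∈ F.E φ₂ h₂ inf_le_right (CS.cproj inf_le_left (CS.cproj le_sup_left z))) :
    z ∈ F.E (VA.comb φ₁ φ₂) (by rw [VA.dom_comb, h₁, h₂]) le_sup_left
      (CS.cproj le_sup_left z) :=
  hF φ₁ φ₂ d₁ d₂ h₁ h₂ d₁ inf_le_left le_sup_left _ z
    (F.mem_E_cproj_self_of_eq φ₁ h₁ (inf_idem d₁) _ _ _) hz

end ExtFamily

/-- binary solution-extension lemma.  Let `ℰ` be piecewise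
extensible, `φ = φ₁ × φ₂` with domains `d₁, d₂`.  If `x ∈ c_{φ^{↓d₁}}`, `y` is
an extension of `x` to `φ₂` (`y ∈ E_{φ₂}(x_{d₁⊓d₂})`), and `z` is a merger of
`x` and `y` (`z_{d₁} = x`, `z_{d₂} = y`), then `z ∈ c_φ`. -/
theorem binary_solution_extension {Φ D : Type*} [Lattice D] [OrderBot D]
    {Γ : D → Type*} (VA : ValuationAlgebra Φ D) (CS : ConfigSystem D Γ)
    (F : ExtFamily VA CS) (hF : F.PiecewiseExtensible)
    (φ₁ φ₂ : Φ) (d₁ d₂ : D) (h₁ : VA.dom φ₁ = d₁) (h₂ : VA.dom φ₂ = d₂)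
    (x : Γ d₁) (y : Γ d₂) (z : Γ (d₁ ⊔ d₂))
    (hx : x ∈ F.sol (VA.proj (VA.comb φ₁ φ₂) d₁)
            (VA.dom_proj (VA.comb φ₁ φ₂) d₁
              (by rw [VA.dom_comb, h₁, h₂]; exact le_sup_left)))
    (hy : y ∈ F.E φ₂ h₂ inf_le_right (CS.cproj inf_le_left x))
    (hz₁ : CS.cproj le_sup_left z = x) (hz₂ : CS.cproj le_sup_right z = y) :
    z ∈ F.sol (VA.comb φ₁ φ₂)
          (show VA.dom (VA.comb φ₁ φ₂) = d₁ ⊔ d₂ by rw [VA.dom_comb, h₁, h₂]) := by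
  subst hz₁ hz₂
  rw [F.mem_sol_iff _ _ le_sup_left]
  exact ⟨hx, hF.mem_E_comb_of_mem_E_right h₁ h₂ z hy⟩
end

section
/- For the max-plus valuation algebra of real functions, the extension sets E_φ(x) = { z ∈ Ω_{d(φ)} : z↓X = x and φ(z) = φ^{↓X}(x) } satisfy the two-step decomposition property: for X ⊆ Y ⊆ d(φ) and x ∈ Ω_X, E_φ(x) = { z ∈ Ω_{d(φ)} : z↓Y ∈ E_{φ^{↓Y}}(x) and z ∈ E_φ(z↓Y) }. -/
open Classical

variable {V : Type*} [DecidableEq V]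

/-- The max-plus configuration extension set
`E_φ(x) = { z ∈ Ω_D : z↓X = x and φ(z) = φ^{↓X}(x) }`. -/
noncomputable def ExtSet {V : Type*} [DecidableEq V] {Ω : V → Type*} [∀ v, Fintype (Ω v)]
    [∀ v, Nonempty (Ω v)] [∀ v, DecidableEq (Ω v)] {X D : Finset V}
    (φ : Cfg Ω D → ℝ) (h : X ⊆ D) (x : Cfg Ω X) : Set (Cfg Ω D) :=
  {z | restrict h z = x ∧ φ z = projv φ h x}

/-
The maximum over `Ω_D` of configurations above `x ∈ Ω_X` can be taken in two stages, first over
the configurations `y ∈ Ω_Y` above `x` and then over those above `y`: `(φ^{↓Y})^{↓X} = φ^{↓X}`.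
So for `z` above `x` one has the chain `φ z ≤ φ^{↓Y}(z↓Y) ≤ φ^{↓X}(x)`, and `z` is a maximizer
over `x` exactly when both inequalities are equalities, which is the two-step decomposition.
-/

section Projection

variable {Ω : V → Type*} [∀ v, Fintype (Ω v)] [∀ v, Nonempty (Ω v)] [∀ v, DecidableEq (Ω v)]

theorem projv_le_iff {X D : Finset V} (φ : Cfg Ω D → ℝ) (h : X ⊆ D) (x : Cfg Ω X) {c : ℝ} :
    projv φ h x ≤ c ↔ ∀ z, restrict h z = x → φ z ≤ c := by
  unfold projv
  exact (Finset.sup'_le_iff _ φ).trans (by simp)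

theorem le_projv_restrict {X D : Finset V} (φ : Cfg Ω D → ℝ) (h : X ⊆ D) (z : Cfg Ω D) :
    φ z ≤ projv φ h (restrict h z) :=
  Finset.le_sup' φ (by simp)

theorem projv_projv {X Y D : Finset V} (φ : Cfg Ω D → ℝ) (hXY : X ⊆ Y) (hYD : Y ⊆ D)
    (x : Cfg Ω X) : projv (projv φ hYD) hXY x = projv φ (hXY.trans hYD) x := by
  apply le_antisymm
  · rw [projv_le_iff]
    rintro y rfl
    rw [projv_le_iff]
    rintro z rfl
    exact le_projv_restrict φ (hXY.trans hYD) z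
  · rw [projv_le_iff]
    rintro z rfl
    exact (le_projv_restrict φ hYD z).trans (le_projv_restrict (projv φ hYD) hXY _)

end Projection

/-- for the max-plus valuation algebra of real functions, the
extension sets satisfy the two-step decomposition property: for
`X ⊆ Y ⊆ d(φ)` and `x ∈ Ω_X`,
`E_φ(x) = { z : z↓Y ∈ E_{φ^{↓Y}}(x) and z ∈ E_φ(z↓Y) }`. -/
theorem maxplus_two_step_decomposition
    {V : Type*} [DecidableEq V] {Ω : V → Type*} [∀ v, Fintype (Ω v)]
    [∀ v, Nonempty (Ω v)] [∀ v, DecidableEq (Ω v)] {X Y D : Finset V}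
    (φ : Cfg Ω D → ℝ) (hXY : X ⊆ Y) (hYD : Y ⊆ D) (x : Cfg Ω X) :
    ExtSet φ (hXY.trans hYD) x
      = {z : Cfg Ω D | restrict hYD z ∈ ExtSet (projv φ hYD) hXY x
          ∧ z ∈ ExtSet φ hYD (restrict hYD z)} := by
  ext z
  simp only [ExtSet, Set.mem_ofPred_eq, projv_projv, true_and]
  have hφ : φ z ≤ projv φ hYD (restrict hYD z) := le_projv_restrict φ hYD z
  have hY :
      projv φ hYD (restrict hYD z) ≤ projv φ (hXY.trans hYD) (restrict (hXY.trans hYD) z) := by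
    rw [← projv_projv φ hXY hYD]
    exact le_projv_restrict (projv φ hYD) hXY (restrict hYD z)
  constructor
  · rintro ⟨rfl, hmax⟩
    have hYmax := le_antisymm hY (hmax ▸ hφ)
    exact ⟨⟨rfl, hYmax⟩, hmax.trans hYmax.symm⟩
  · rintro ⟨⟨hzx, hYmax⟩, hmax⟩
    exact ⟨hzx, hmax.trans hYmax⟩
end

section
/- In a join tree, for any node i the label intersection with the rest of the tree is bounded by the separator: if 𝒯_i is the subtree rooted at i in a rooted join tree, then (⋁_{j ∈ 𝒯_i} λ(j)) ∧ (⋁_{j ∉ 𝒯_i} λ(j)) ≤ λ(i) ∧ λ(p(i)) = s_i. -/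
/-! A pair `a ∈ 𝒯ᵢ`, `b ∉ 𝒯ᵢ` has its path passing through both `i` and `p i`: every common
ancestor of `a` and `b` lies strictly above `i`, since an ancestor of `a` is comparable with `i`
and `b` has no ancestor below `i`. The running intersection property then bounds
`λ(a) ⊓ λ(b)` by `λ(i) ⊓ λ(p i)`, and distributivity turns the meet of the two suprema into
the supremum of these pairwise meets. -/

open Classical

/-- `Anc p a k`: `k` is an ancestor of `a` (including `a` itself) for the
parent function `p` of a rooted tree. -/
def Anc {n : ℕ} (p : Fin (n + 1) → Fin (n + 1)) (a k : Fin (n + 1)) : Prop :=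
  ∃ m : ℕ, p^[m] a = k

/-- `OnPath p a b k`: `k` lies on the unique path between `a` and `b` in the
rooted tree with parent function `p`. -/
def OnPath {n : ℕ} (p : Fin (n + 1) → Fin (n + 1)) (a b k : Fin (n + 1)) : Prop :=
  (Anc p a k ∨ Anc p b k) ∧ ∀ c, Anc p a c → Anc p b c → Anc p k c

namespace Anc

variable {n : ℕ} {p : Fin (n + 1) → Fin (n + 1)} {a b c i : Fin (n + 1)}

lemma trans (hab : Anc p a b) (hbc : Anc p b c) : Anc p a c := by
  obtain ⟨m, rfl⟩ := hab
  obtain ⟨k, rfl⟩ := hbc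
  exact ⟨k + m, Function.iterate_add_apply p k m a⟩

lemma parent (h : Anc p a i) : Anc p a (p i) := by
  obtain ⟨m, rfl⟩ := h
  exact ⟨m + 1, Function.iterate_succ_apply' p m a⟩

lemma parent_of_ne (h : Anc p i c) (hne : c ≠ i) : Anc p (p i) c := by
  obtain ⟨_ | m, rfl⟩ := h
  · exact absurd rfl hne
  · exact ⟨m, (Function.iterate_succ_apply p m i).symm⟩

lemma total_of_common (hi : Anc p a i) (hc : Anc p a c) : Anc p i c ∨ Anc p c i := by
  obtain ⟨m, rfl⟩ := hi
  obtain ⟨k, rfl⟩ := hc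
  rcases le_total m k with h | h
  · exact .inl ⟨k - m, by rw [← Function.iterate_add_apply, Nat.sub_add_cancel h]⟩
  · exact .inr ⟨m - k, by rw [← Function.iterate_add_apply, Nat.sub_add_cancel h]⟩

lemma common_strictly_above (ha : Anc p a i) (hb : ¬ Anc p b i)
    (hac : Anc p a c) (hbc : Anc p b c) : Anc p i c ∧ c ≠ i := by
  rcases total_of_common ha hac with hic | hci
  · exact ⟨hic, by rintro rfl; exact hb hbc⟩
  · exact absurd (hbc.trans hci) hb

end Anc

section OnPath

variable {n : ℕ} {p : Fin (n + 1) → Fin (n + 1)} {a b i : Fin (n + 1)}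

lemma onPath_of_anc_of_not_anc (ha : Anc p a i) (hb : ¬ Anc p b i) : OnPath p a b i :=
  ⟨.inl ha, fun _ hac hbc => (ha.common_strictly_above hb hac hbc).1⟩

lemma onPath_parent_of_anc_of_not_anc (ha : Anc p a i) (hb : ¬ Anc p b i) :
    OnPath p a b (p i) :=
  ⟨.inl ha.parent, fun _ hac hbc =>
    let ⟨hic, hne⟩ := ha.common_strictly_above hb hac hbc
    hic.parent_of_ne hne⟩

end OnPath

theorem subtree_separator_bound_general {D : Type*} [DistribLattice D] [OrderBot D]
    (n : ℕ) (lam : Fin (n + 1) → D) (p : Fin (n + 1) → Fin (n + 1))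
    (hri : ∀ a b k, OnPath p a b k → lam a ⊓ lam b ≤ lam k)
    (i : Fin (n + 1)) :
    ((Finset.univ.filter fun j => Anc p j i).sup lam)
        ⊓ ((Finset.univ.filter fun j => ¬ Anc p j i).sup lam)
      ≤ lam i ⊓ lam (p i) := by
  rw [Finset.sup_inf_sup]
  refine Finset.sup_le fun ⟨a, b⟩ hab => ?_
  simp only [Finset.mem_product, Finset.mem_filter, Finset.mem_univ, true_and] at hab
  obtain ⟨ha, hb⟩ := hab
  exact le_inf (hri a b i (onPath_of_anc_of_not_anc ha hb))
    (hri a b (p i) (onPath_parent_of_anc_of_not_anc ha hb))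

/-- in a rooted join tree (labels in a distributive lattice,
running intersection property), for any non-root node `i` the label of the
subtree `𝒯ᵢ` meets the label of the rest of the tree below the separator:
`(⨆_{j ∈ 𝒯ᵢ} λ(j)) ⊓ (⨆_{j ∉ 𝒯ᵢ} λ(j)) ≤ λ(i) ⊓ λ(p(i)) = sᵢ`. -/
theorem subtree_separator_bound {D : Type*} [DistribLattice D] [OrderBot D]
    (n : ℕ) (lam : Fin (n + 1) → D) (p : Fin (n + 1) → Fin (n + 1))
    (hroot : p (Fin.last n) = Fin.last n)
    (hp : ∀ i, i ≠ Fin.last n → i < p i)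
    (hri : ∀ a b k, OnPath p a b k → lam a ⊓ lam b ≤ lam k)
    (i : Fin (n + 1)) (hi : i ≠ Fin.last n) :
    ((Finset.univ.filter fun j => Anc p j i).sup lam)
        ⊓ ((Finset.univ.filter fun j => ¬ Anc p j i).sup lam)
      ≤ lam i ⊓ lam (p i) :=
  subtree_separator_bound_general n lam p hri i
end
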